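/- Let {X_n}, {Y_n}, {Z_n} be sequences of random variables bounded below by -1 with E[X_n] = E[Y_n] = E[Z_n] = 0, Var(Y_n) = o(Var(X_n)), Var(Z_n) = o(Var(X_n)), Var(X_n) → 0, and Var(X_n)^{-1/2} X_n converging in distribution to N(0,1). Then Var(X_n - Y_n - Z_n)^{-1/2} log((1+X_n)/((1+Y_n)(1+Z_n))) converges in distribution to N(0,1). -/

import Mathlib

/-!
Off the event where one of `Xₙ, Yₙ, Zₙ` is below `-1/2`, whose probability tends to `0` by
Chebyshev, the statistic equals `log (1 + Xₙ) - log (1 + Yₙ) - log (1 + Zₙ)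
= Xₙ - Yₙ - Zₙ + O(Xₙ² + Yₙ² + Zₙ²)`. Standard deviations satisfy the triangle inequality, so
`τₙ = √Var(Xₙ - Yₙ - Zₙ)` is asymptotically equivalent to `σₙ = √Var Xₙ`. Dividing by `τₙ`, the
statistic differs from `Xₙ / σₙ` by terms that tend to `0` in probability: the quadratic ones
because `E[Xₙ²] / τₙ ≍ σₙ → 0`, the linear ones because `Var Yₙ / τₙ² → 0`, and
`(σₙ / τₙ - 1) · Xₙ / σₙ` because `Xₙ / σₙ` is tight. A Slutsky argument on distribution
functions, valid at continuity points of the limit, concludes.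
-/

open MeasureTheory ProbabilityTheory Filter Set Topology Asymptotics

lemma Real.abs_log_one_add_sub_self_le {t : ℝ} (ht : -1/2 ≤ t) :
    |Real.log (1 + t) - t| ≤ 2 * t ^ 2 := by
  have h1 : 0 < 1 + t := by linarith
  have hupper := Real.log_le_sub_one_of_pos h1
  have hlower := Real.one_sub_inv_le_log_of_pos h1
  have hgap : t - t ^ 2 / (1 + t) = 1 - (1 + t)⁻¹ := by field_simp; ring
  have hsq : t ^ 2 / (1 + t) ≤ 2 * t ^ 2 := by
    rw [div_le_iff₀ h1]; nlinarith [sq_nonneg t]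
  rw [abs_le]; constructor <;> nlinarith [sq_nonneg t]

lemma abs_log_div_mul_div_sub_div_le {x y z σ τ : ℝ} (hσ : 0 < σ) (hτ : 0 < τ)
    (hx : -1/2 ≤ x) (hy : -1/2 ≤ y) (hz : -1/2 ≤ z) :
    |Real.log ((1 + x) / ((1 + y) * (1 + z))) / τ - x / σ| ≤
      2 * (x ^ 2 / τ + y ^ 2 / τ + z ^ 2 / τ + |y / τ| + |z / τ| + |(σ / τ - 1) * (x / σ)|) := by
  have hL : Real.log ((1 + x) / ((1 + y) * (1 + z)))
      = Real.log (1 + x) - Real.log (1 + y) - Real.log (1 + z) := by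
    rw [Real.log_div (by linarith) (by nlinarith), Real.log_mul (by linarith) (by linarith)]
    ring
  rw [hL]
  set L := Real.log (1 + x) - Real.log (1 + y) - Real.log (1 + z) with hLdef
  have hLx : |L - x| ≤ 2 * x ^ 2 + 2 * y ^ 2 + 2 * z ^ 2 + |y| + |z| := by
    have rx := abs_le.1 (Real.abs_log_one_add_sub_self_le hx)
    have ry := abs_le.1 (Real.abs_log_one_add_sub_self_le hy)
    have rz := abs_le.1 (Real.abs_log_one_add_sub_self_le hz)
    rw [hLdef, abs_le]
    constructor <;> linarith [le_abs_self y, neg_abs_le y, le_abs_self z, neg_abs_le z]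
  have hsplit : L / τ - x / σ = (L - x) / τ + (σ / τ - 1) * (x / σ) := by
    field_simp
    ring
  have hdiv : |(L - x) / τ| ≤ 2 * (x ^ 2 / τ + y ^ 2 / τ + z ^ 2 / τ) + |y / τ| + |z / τ| := by
    rw [abs_div, abs_div, abs_div, abs_of_pos hτ, div_le_iff₀ hτ]
    field_simp
    linarith
  rw [hsplit]
  refine (abs_add_le _ _).trans ?_
  linarith [abs_nonneg (y / τ), abs_nonneg (z / τ), abs_nonneg ((σ / τ - 1) * (x / σ))]

lemma ProbabilityTheory.continuous_cdf (ν : Measure ℝ) [IsProbabilityMeasure ν]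
    [NullSingletonClass ν] : Continuous (cdf ν) := by
  refine continuous_iff_continuousAt.2 fun x ↦
    (monotone_cdf ν).continuousAt_iff_leftLim_eq_rightLim.2 ?_
  have h := (cdf ν).measure_singleton x
  rw [measure_cdf, measure_singleton, eq_comm, ENNReal.ofReal_eq_zero, sub_nonpos] at h
  rw [(cdf ν).rightLim_eq]
  exact le_antisymm ((monotone_cdf ν).leftLim_le le_rfl) h

lemma ProbabilityTheory.cdf_gaussianReal_lt_one (m : ℝ) {v : NNReal} (hv : v ≠ 0) (x : ℝ) :
    cdf (gaussianReal m v) x < 1 := by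
  have hpos : (gaussianReal m v).real (Iic x)ᶜ ≠ 0 := by
    rw [compl_Iic, measureReal_ne_zero_iff]
    intro h
    simpa using gaussianReal_absolutelyContinuous' m hv h
  rw [probReal_compl_eq_one_sub measurableSet_Iic] at hpos
  rw [cdf_eq_real]
  exact lt_of_le_of_ne measureReal_le_one (by contrapose! hpos; linarith)

namespace MeasureTheory

variable {ι Ω E F : Type*} {m : MeasurableSpace Ω} {μ : Measure Ω} {l : Filter ι}

theorem TendstoInMeasure.add [SeminormedAddCommGroup E] {f g : ι → Ω → E} {f' g' : Ω → E}
    (hf : TendstoInMeasure μ f l f') (hg : TendstoInMeasure μ g l g') :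
    TendstoInMeasure μ (f + g) l (f' + g') := by
  rw [tendstoInMeasure_iff_norm] at *
  intro ε hε
  have hsum := (hf (ε / 2) (half_pos hε)).add (hg (ε / 2) (half_pos hε))
  rw [add_zero] at hsum
  refine tendsto_of_tendsto_of_tendsto_of_le_of_le tendsto_const_nhds hsum (fun _ ↦ zero_le)
    fun i ↦ (measure_mono fun ω hω ↦ ?_).trans (measure_union_le _ _)
  by_contra h
  simp only [mem_union, mem_ofPred_eq, not_or, not_le] at h hω
  have : ‖(f + g) i ω - (f' + g') ω‖ ≤ ‖f i ω - f' ω‖ + ‖g i ω - g' ω‖ := by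
    simpa [add_sub_add_comm] using norm_add_le (f i ω - f' ω) (g i ω - g' ω)
  linarith

theorem TendstoInMeasure.abs {f : ι → Ω → ℝ}
    (hf : TendstoInMeasure μ f l 0) : TendstoInMeasure μ (fun i ω ↦ |f i ω|) l 0 := by
  simpa [tendstoInMeasure_iff_norm] using hf

theorem tendstoInMeasure_zero_of_norm_le_mul [SeminormedAddCommGroup E]
    [SeminormedAddCommGroup F] {f : ι → Ω → E} {g : ι → Ω → F} {A : ι → Set Ω} {C : ℝ}
    (hC : 0 < C) (hg : TendstoInMeasure μ g l 0) (hA : Tendsto (fun i ↦ μ (A i)) l (𝓝 0))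
    (hfg : ∀ᶠ i in l, ∀ ω ∉ A i, ‖f i ω‖ ≤ C * ‖g i ω‖) : TendstoInMeasure μ f l 0 := by
  rw [tendstoInMeasure_iff_norm] at *
  intro ε hε
  have hsum := hA.add (hg (ε / C) (div_pos hε hC))
  rw [add_zero] at hsum
  refine tendsto_of_tendsto_of_tendsto_of_le_of_le' tendsto_const_nhds hsum
    (Eventually.of_forall fun _ ↦ zero_le) ?_
  filter_upwards [hfg] with i hi
  refine (measure_mono fun ω hω ↦ ?_).trans (measure_union_le _ _)
  by_cases hωA : ω ∈ A i
  · exact Or.inl hωA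
  · right
    simp only [Pi.zero_apply, sub_zero, mem_ofPred_eq] at hω ⊢
    rw [div_le_iff₀ hC]
    linarith [hi ω hωA]

end MeasureTheory

namespace ProbabilityTheory

variable {ι Ω : Type*} {m : MeasurableSpace Ω} {μ : Measure Ω} {l : Filter ι}

lemma eventually_ne_zero_of_tendsto_measureReal_div_le [IsProbabilityMeasure μ]
    {W : ι → Ω → ℝ} {c : ι → ℝ} {p : ℝ} (hp : p < 1)
    (h : Tendsto (fun i ↦ μ.real {ω | W i ω / c i ≤ 0}) l (𝓝 p)) : ∀ᶠ i in l, c i ≠ 0 := by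
  filter_upwards [h.eventually (gt_mem_nhds hp)] with i hi hc
  simp [hc] at hi

lemma covariance_sq_le_variance_mul_variance [IsFiniteMeasure μ] {X Y : Ω → ℝ}
    (hX : MemLp X 2 μ) (hY : MemLp Y 2 μ) : cov[X, Y; μ] ^ 2 ≤ Var[X; μ] * Var[Y; μ] := by
  have hquad : ∀ t : ℝ, 0 ≤ Var[X; μ] * (t * t) + 2 * cov[X, Y; μ] * t + Var[Y; μ] := by
    intro t
    have h := variance_add (hX.const_smul t) hY
    rw [variance_smul, covariance_smul_left] at h
    nlinarith [variance_nonneg (t • X + Y) μ]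
  have := discrim_le_zero hquad
  rw [discrim] at this
  nlinarith

lemma abs_sqrt_variance_sub_sub_sqrt_variance_le [IsFiniteMeasure μ] {X Y : Ω → ℝ}
    (hX : MemLp X 2 μ) (hY : MemLp Y 2 μ) :
    |√Var[fun ω ↦ X ω - Y ω; μ] - √Var[X; μ]| ≤ √Var[Y; μ] := by
  have hcov : |cov[X, Y; μ]| ≤ √Var[X; μ] * √Var[Y; μ] := by
    rw [← Real.sqrt_mul (variance_nonneg _ _), ← Real.sqrt_sq_eq_abs]
    exact Real.sqrt_le_sqrt (covariance_sq_le_variance_mul_variance hX hY)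
  have hsub := variance_fun_sub hX hY
  rw [← Real.sq_sqrt (variance_nonneg X μ), ← Real.sq_sqrt (variance_nonneg Y μ)] at hsub
  set a := √Var[X; μ]
  set b := √Var[Y; μ]
  have hlower : a - b ≤ √Var[fun ω ↦ X ω - Y ω; μ] :=
    (le_abs_self _).trans (Real.abs_le_sqrt (by rw [hsub]; nlinarith [abs_le.1 hcov]))
  have hupper : √Var[fun ω ↦ X ω - Y ω; μ] ≤ a + b :=
    (Real.sqrt_le_left (by positivity)).2 (by rw [hsub]; nlinarith [abs_le.1 hcov])
  rw [abs_sub_le_iff]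
  constructor <;> linarith

lemma meas_ge_abs_div_le_variance_div_sq [IsFiniteMeasure μ] {W : Ω → ℝ} (hW : MemLp W 2 μ)
    (hW0 : μ[W] = 0) {ε : ℝ} (hε : 0 < ε) (c : ℝ) :
    μ {ω | ε ≤ |W ω / c|} ≤ ENNReal.ofReal (Var[W; μ] / (ε * c) ^ 2) := by
  rcases eq_or_ne c 0 with rfl | hc
  · simp [hε.not_ge]
  have hset : {ω | ε ≤ |W ω / c|} = {ω | ε * |c| ≤ |W ω - μ[W]|} := by
    ext ω
    simp [hW0, abs_div, le_div_iff₀ (abs_pos.2 hc)]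
  rw [hset, ← sq_abs (ε * c), abs_mul, abs_of_pos hε]
  exact meas_ge_le_variance_div_sq hW (mul_pos hε (abs_pos.2 hc))

lemma tendstoInMeasure_div_of_isLittleO_variance [IsFiniteMeasure μ] {W : ι → Ω → ℝ}
    {c : ι → ℝ} (hW : ∀ i, MemLp (W i) 2 μ) (hW0 : ∀ i, μ[W i] = 0)
    (h : (fun i ↦ Var[W i; μ]) =o[l] fun i ↦ c i ^ 2) :
    TendstoInMeasure μ (fun i ω ↦ W i ω / c i) l 0 := by
  rw [tendstoInMeasure_iff_norm]
  intro ε hε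
  have hlim : Tendsto (fun i ↦ ENNReal.ofReal (Var[W i; μ] / (ε * c i) ^ 2)) l (𝓝 0) := by
    simpa [mul_pow, div_div, mul_comm] using
      ENNReal.tendsto_ofReal (h.tendsto_div_nhds_zero.div_const (ε ^ 2))
  refine tendsto_of_tendsto_of_tendsto_of_le_of_le tendsto_const_nhds hlim
    (fun _ ↦ zero_le) fun i ↦ ?_
  simpa only [Pi.zero_apply, sub_zero, Real.norm_eq_abs] using
    meas_ge_abs_div_le_variance_div_sq (hW i) (hW0 i) hε (c i)

lemma tendsto_measure_le_abs_of_tendsto_variance [IsFiniteMeasure μ] {W : ι → Ω → ℝ}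
    (hW : ∀ i, MemLp (W i) 2 μ) (hW0 : ∀ i, μ[W i] = 0)
    (hV : Tendsto (fun i ↦ Var[W i; μ]) l (𝓝 0)) {ε : ℝ} (hε : 0 < ε) :
    Tendsto (fun i ↦ μ {ω | ε ≤ |W i ω|}) l (𝓝 0) := by
  have h := tendstoInMeasure_div_of_isLittleO_variance (c := fun _ ↦ 1) hW hW0
    (by simpa using (isLittleO_one_iff ℝ).2 hV)
  simpa using tendstoInMeasure_iff_norm.1 h ε hε

lemma tendstoInMeasure_sq_div_of_isLittleO_variance [IsFiniteMeasure μ] {W : ι → Ω → ℝ}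
    {c : ι → ℝ} (hW : ∀ i, MemLp (W i) 2 μ) (hW0 : ∀ i, μ[W i] = 0)
    (h : (fun i ↦ Var[W i; μ]) =o[l] c) :
    TendstoInMeasure μ (fun i ω ↦ W i ω ^ 2 / c i) l 0 := by
  have h' : (fun i ↦ Var[W i; μ]) =o[l] fun i ↦ √|c i| ^ 2 := by
    simpa [Real.sq_sqrt (abs_nonneg _)] using h.abs_right
  have hlin := tendstoInMeasure_iff_norm.1 (tendstoInMeasure_div_of_isLittleO_variance hW hW0 h')
  rw [tendstoInMeasure_iff_norm]
  intro ε hε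
  refine (hlin (√ε) (Real.sqrt_pos.2 hε)).congr
    fun i ↦ congrArg μ (ext fun ω ↦ ?_)
  simp only [Pi.zero_apply, sub_zero, Real.norm_eq_abs, mem_ofPred_eq]
  rw [Real.sqrt_le_left (abs_nonneg _), sq_abs, div_pow, Real.sq_sqrt (abs_nonneg _), abs_div,
    abs_of_nonneg (sq_nonneg (W i ω))]

lemma tendstoInMeasure_mul_of_tendsto_cdf [IsProbabilityMeasure μ] {U : ι → Ω → ℝ}
    (hUm : ∀ i, Measurable (U i)) (ν : Measure ℝ) [IsProbabilityMeasure ν]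
    (hU : ∀ y, Tendsto (fun i ↦ μ.real {ω | U i ω ≤ y}) l (𝓝 (cdf ν y)))
    {c : ι → ℝ} (hc : Tendsto c l (𝓝 0)) :
    TendstoInMeasure μ (fun i ω ↦ c i * U i ω) l 0 := by
  rw [tendstoInMeasure_iff_measureReal_norm]
  intro ε hε
  simp only [Pi.zero_apply, sub_zero, Real.norm_eq_abs]
  refine tendsto_order.2 ⟨fun a ha ↦ Eventually.of_forall fun _ ↦ ha.trans_le measureReal_nonneg,
    fun b hb ↦ ?_⟩
  obtain ⟨M, ⟨hMtop, hMbot⟩, hM⟩ : ∃ M, (1 - b / 2 < cdf ν M ∧ cdf ν (-M) < b / 2) ∧ 0 < M :=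
    ((((tendsto_cdf_atTop ν).eventually (lt_mem_nhds (by linarith))).and
      (((tendsto_cdf_atBot ν).comp tendsto_neg_atTop_atBot).eventually
        (gt_mem_nhds (half_pos hb)))).and (eventually_gt_atTop 0)).exists
  have hsmall : ∀ᶠ i in l, |c i| * M < ε :=
    (hc.abs.mul_const M).eventually (gt_mem_nhds (by simpa using hε))
  have htail : Tendsto (fun i ↦ μ.real {ω | U i ω ≤ -M} + (1 - μ.real {ω | U i ω ≤ M})) l
      (𝓝 (cdf ν (-M) + (1 - cdf ν M))) := (hU (-M)).add (tendsto_const_nhds.sub (hU M))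
  filter_upwards [hsmall, htail.eventually (gt_mem_nhds (by linarith : _ < b))] with i hi hib
  refine lt_of_le_of_lt ?_ hib
  rw [← probReal_compl_eq_one_sub (measurableSet_le (hUm i) measurable_const)]
  refine (measureReal_mono fun ω hω ↦ ?_).trans (measureReal_union_le _ _)
  simp only [mem_ofPred_eq, mem_union, mem_compl_iff, not_le, abs_mul] at hω ⊢
  by_contra! h
  have : |U i ω| ≤ M := abs_le.2 ⟨h.1.le, h.2⟩
  nlinarith [abs_nonneg (c i)]

lemma tendsto_measureReal_le_of_tendstoInMeasure_sub [IsFiniteMeasure μ] {S U : ι → Ω → ℝ}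
    {F : ℝ → ℝ} {x : ℝ} (hF : ContinuousAt F x)
    (hU : ∀ y, Tendsto (fun i ↦ μ.real {ω | U i ω ≤ y}) l (𝓝 (F y)))
    (hSU : TendstoInMeasure μ (S - U) l 0) :
    Tendsto (fun i ↦ μ.real {ω | S i ω ≤ x}) l (𝓝 (F x)) := by
  rw [tendstoInMeasure_iff_measureReal_norm] at hSU
  simp only [Pi.sub_apply, Pi.zero_apply, sub_zero, Real.norm_eq_abs] at hSU
  have hshift : ∀ s : ℝ, Tendsto (fun δ ↦ F (x + s * δ)) (𝓝[>] 0) (𝓝 (F x)) := fun s ↦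
    hF.tendsto.comp <| tendsto_nhdsWithin_of_tendsto_nhds <|
      (continuous_const.add (continuous_const.mul continuous_id)).tendsto' 0 x (by simp)
  refine tendsto_order.2 ⟨fun a ha ↦ ?_, fun b hb ↦ ?_⟩
  · obtain ⟨δ, hδF, hδ⟩ :=
      (((hshift (-1)).eventually (lt_mem_nhds ha)).and self_mem_nhdsWithin).exists
    simp only [neg_one_mul, ← sub_eq_add_neg] at hδF
    have hlim := (hU (x - δ)).sub (hSU δ hδ)
    rw [sub_zero] at hlim
    filter_upwards [hlim.eventually (lt_mem_nhds hδF)] with i hi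
    refine hi.trans_le (sub_le_iff_le_add.2 ((measureReal_mono fun ω hω ↦ ?_).trans
      (measureReal_union_le _ _)))
    by_contra h
    simp only [mem_union, mem_ofPred_eq, not_or, not_le] at h hω
    linarith [(abs_lt.1 h.2).2]
  · obtain ⟨δ, hδF, hδ⟩ :=
      (((hshift 1).eventually (gt_mem_nhds hb)).and self_mem_nhdsWithin).exists
    rw [one_mul] at hδF
    have hlim := (hU (x + δ)).add (hSU δ hδ)
    rw [add_zero] at hlim
    filter_upwards [hlim.eventually (gt_mem_nhds hδF)] with i hi
    refine lt_of_le_of_lt ((measureReal_mono fun ω hω ↦ ?_).trans (measureReal_union_le _ _)) hi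
    by_contra h
    simp only [mem_union, mem_ofPred_eq, not_or, not_le] at h hω
    linarith [(abs_lt.1 h.2).1]

end ProbabilityTheory

section DeltaMethod

variable {Ω : Type*} {m : MeasurableSpace Ω} {μ : Measure Ω} [IsProbabilityMeasure μ]
  {X Y Z : ℕ → Ω → ℝ}

lemma isEquivalent_sqrt_variance_sub_sub (hX : ∀ n, MemLp (X n) 2 μ)
    (hY : ∀ n, MemLp (Y n) 2 μ) (hZ : ∀ n, MemLp (Z n) 2 μ)
    (hVY : (fun n ↦ Var[Y n; μ]) =o[atTop] fun n ↦ Var[X n; μ])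
    (hVZ : (fun n ↦ Var[Z n; μ]) =o[atTop] fun n ↦ Var[X n; μ]) :
    (fun n ↦ √Var[fun ω ↦ X n ω - Y n ω - Z n ω; μ]) ~[atTop] fun n ↦ √Var[X n; μ] := by
  have hnonneg : 0 ≤ᶠ[atTop] fun n ↦ Var[X n; μ] := Eventually.of_forall fun n ↦ variance_nonneg _ _
  refine IsBigO.trans_isLittleO (g := fun n ↦ √Var[Y n; μ] + √Var[Z n; μ]) ?_
    ((hVY.sqrt hnonneg).add (hVZ.sqrt hnonneg))
  refine IsBigO.of_bound 1 (Eventually.of_forall fun n ↦ ?_)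
  have hXY := abs_sqrt_variance_sub_sub_sqrt_variance_le (hX n) (hY n)
  have hXYZ : |√Var[fun ω ↦ X n ω - Y n ω - Z n ω; μ] - √Var[fun ω ↦ X n ω - Y n ω; μ]|
      ≤ √Var[Z n; μ] := abs_sqrt_variance_sub_sub_sqrt_variance_le ((hX n).sub (hY n)) (hZ n)
  rw [Pi.sub_apply, one_mul, Real.norm_eq_abs, Real.norm_of_nonneg (by positivity)]
  exact (abs_sub_le _ √Var[fun ω ↦ X n ω - Y n ω; μ] _).trans (by linarith)

lemma tendstoInMeasure_log_div_mul_div_sub_div (hXm : ∀ n, Measurable (X n))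
    (hX : ∀ n, MemLp (X n) 2 μ) (hY : ∀ n, MemLp (Y n) 2 μ) (hZ : ∀ n, MemLp (Z n) 2 μ)
    (hEX : ∀ n, μ[X n] = 0) (hEY : ∀ n, μ[Y n] = 0) (hEZ : ∀ n, μ[Z n] = 0)
    (hVY : (fun n ↦ Var[Y n; μ]) =o[atTop] fun n ↦ Var[X n; μ])
    (hVZ : (fun n ↦ Var[Z n; μ]) =o[atTop] fun n ↦ Var[X n; μ])
    (hVX : Tendsto (fun n ↦ Var[X n; μ]) atTop (𝓝 0))
    (hVXpos : ∀ᶠ n in atTop, 0 < Var[X n; μ]) (ν : Measure ℝ) [IsProbabilityMeasure ν]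
    (hU : ∀ y, Tendsto (fun n ↦ μ.real {ω | X n ω / √Var[X n; μ] ≤ y}) atTop (𝓝 (cdf ν y))) :
    TendstoInMeasure μ (fun n ω ↦ Real.log ((1 + X n ω) / ((1 + Y n ω) * (1 + Z n ω)))
      / √Var[fun ω ↦ X n ω - Y n ω - Z n ω; μ] - X n ω / √Var[X n; μ]) atTop 0 := by
  set σ := fun n ↦ √Var[X n; μ]
  set τ := fun n ↦ √Var[fun ω ↦ X n ω - Y n ω - Z n ω; μ]
  have hτσ : τ ~[atTop] σ := isEquivalent_sqrt_variance_sub_sub hX hY hZ hVY hVZ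
  have hτσ1 : Tendsto (τ / σ) atTop (𝓝 1) :=
    (isEquivalent_iff_tendsto_one (hVXpos.mono fun n h ↦ (Real.sqrt_pos.2 h).ne')).1 hτσ
  have hστ1 : Tendsto (fun n ↦ σ n / τ n - 1) atTop (𝓝 0) := by
    simpa [inv_div] using (hτσ1.inv₀ one_ne_zero).sub_const 1
  have hτpos : ∀ᶠ n in atTop, 0 < τ n := (hτσ1.eventually_ne one_ne_zero).mono fun n h ↦
    (Real.sqrt_nonneg _).lt_of_ne' (by contrapose! h; simp [τ, h])
  have hVXτ : (fun n ↦ Var[X n; μ]) =o[atTop] τ := by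
    have hσ0 : Tendsto σ atTop (𝓝 0) := by simpa using hVX.sqrt
    exact (((isLittleO_one_iff ℝ).2 hσ0).mul_isBigO hτσ.isBigO_symm).congr
      (fun n ↦ Real.mul_self_sqrt (variance_nonneg _ _)) fun n ↦ one_mul _
  have hVXτ2 : (fun n ↦ Var[X n; μ]) =O[atTop] fun n ↦ τ n ^ 2 :=
    (hτσ.pow 2).isBigO_symm.congr (fun n ↦ Real.sq_sqrt (variance_nonneg _ _)) fun n ↦ rfl
  have hg := ((((((tendstoInMeasure_sq_div_of_isLittleO_variance hX hEX hVXτ).add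
    (tendstoInMeasure_sq_div_of_isLittleO_variance hY hEY (hVY.trans hVXτ))).add
    (tendstoInMeasure_sq_div_of_isLittleO_variance hZ hEZ (hVZ.trans hVXτ))).add
    (tendstoInMeasure_div_of_isLittleO_variance hY hEY (hVY.trans_isBigO hVXτ2)).abs).add
    (tendstoInMeasure_div_of_isLittleO_variance hZ hEZ (hVZ.trans_isBigO hVXτ2)).abs).add
    (tendstoInMeasure_mul_of_tendsto_cdf (fun n ↦ (hXm n).div_const _) ν hU hστ1).abs)
  simp only [add_zero] at hg
  refine tendstoInMeasure_zero_of_norm_le_mul two_pos hg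
    (A := fun n ↦ {ω | 1 / 2 ≤ |X n ω|} ∪ {ω | 1 / 2 ≤ |Y n ω|} ∪ {ω | 1 / 2 ≤ |Z n ω|}) ?_ ?_
  · have hsum := ((tendsto_measure_le_abs_of_tendsto_variance hX hEX hVX one_half_pos).add
      (tendsto_measure_le_abs_of_tendsto_variance hY hEY (hVY.trans_tendsto hVX) one_half_pos)).add
      (tendsto_measure_le_abs_of_tendsto_variance hZ hEZ (hVZ.trans_tendsto hVX) one_half_pos)
    simp only [add_zero] at hsum
    exact tendsto_of_tendsto_of_tendsto_of_le_of_le tendsto_const_nhds hsum (fun _ ↦ zero_le)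
      fun n ↦ (measure_union_le _ _).trans (add_le_add_left (measure_union_le _ _) _)
  · filter_upwards [hVXpos, hτpos] with n hσn hτn ω hω
    simp only [mem_union, mem_ofPred_eq, not_or, not_le] at hω
    obtain ⟨⟨hXω, hYω⟩, hZω⟩ := hω
    simp only [Real.norm_eq_abs, Pi.add_apply]
    refine (abs_log_div_mul_div_sub_div_le (Real.sqrt_pos.2 hσn) hτn
      (by linarith [abs_lt.1 hXω]) (by linarith [abs_lt.1 hYω])
      (by linarith [abs_lt.1 hZω])).trans ?_
    gcongr
    exact le_abs_self _

end DeltaMethod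

theorem stmt11_general {Ω : Type*} [MeasureSpace Ω] [IsProbabilityMeasure (ℙ : Measure Ω)]
    (X Y Z : ℕ → Ω → ℝ)
    (hXmeas : ∀ n, Measurable (X n))
    (hX2 : ∀ n, MemLp (X n) 2 ℙ) (hY2 : ∀ n, MemLp (Y n) 2 ℙ)
    (hZ2 : ∀ n, MemLp (Z n) 2 ℙ)
    (hEX : ∀ n, ∫ ω, X n ω ∂ℙ = 0) (hEY : ∀ n, ∫ ω, Y n ω ∂ℙ = 0)
    (hEZ : ∀ n, ∫ ω, Z n ω ∂ℙ = 0)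
    (hVY : (fun n => variance (Y n) ℙ) =o[atTop] fun n => variance (X n) ℙ)
    (hVZ : (fun n => variance (Z n) ℙ) =o[atTop] fun n => variance (X n) ℙ)
    (hVX : Tendsto (fun n => variance (X n) ℙ) atTop (nhds 0))
    (hCLT : ∀ x : ℝ,
      Tendsto (fun n => ℙ {ω | X n ω / Real.sqrt (variance (X n) ℙ) ≤ x}) atTop
        (nhds (gaussianReal 0 1 (Set.Iic x)))) :
    ∀ x : ℝ,
      Tendsto (fun n =>
          ℙ {ω | Real.log ((1 + X n ω) / ((1 + Y n ω) * (1 + Z n ω)))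
              / Real.sqrt (variance (fun ω => X n ω - Y n ω - Z n ω) ℙ) ≤ x}) atTop
        (nhds (gaussianReal 0 1 (Set.Iic x))) := by
  intro x
  have := nullSingletonClass_gaussianReal (μ := 0) (v := 1) one_ne_zero
  have hU : ∀ y, Tendsto (fun n ↦ (ℙ : Measure Ω).real {ω | X n ω / √Var[X n; ℙ] ≤ y}) atTop
      (𝓝 (cdf (gaussianReal 0 1) y)) := fun y ↦ by
    rw [cdf_eq_real]
    exact (ENNReal.tendsto_toReal (measure_ne_top _ _)).comp (hCLT y)
  -- `X n / √0 = 0`, so a vanishing variance would make the cdf of `X n / √Var[X n]` at `0` equal 1.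
  have hVXpos : ∀ᶠ n in atTop, 0 < Var[X n; ℙ] :=
    (eventually_ne_zero_of_tendsto_measureReal_div_le (cdf_gaussianReal_lt_one 0 one_ne_zero 0)
      (hU 0)).mono fun n h ↦ Real.sqrt_pos.1 ((Real.sqrt_nonneg _).lt_of_ne' h)
  have hS := tendsto_measureReal_le_of_tendstoInMeasure_sub (continuous_cdf _).continuousAt hU
    (tendstoInMeasure_log_div_mul_div_sub_div hXmeas hX2 hY2 hZ2 hEX hEY hEZ hVY hVZ hVX hVXpos
      _ hU) (x := x)
  rw [← ofReal_cdf]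
  simpa [ofReal_measureReal] using ENNReal.tendsto_ofReal hS

/-- Delta-method asymptotic normality for the PMI-type statistic
`log((1+Xₙ)/((1+Yₙ)(1+Zₙ)))`: if `Xₙ, Yₙ, Zₙ ≥ -1` are centered with
`Var(Yₙ) = o(Var(Xₙ))`, `Var(Zₙ) = o(Var(Xₙ))`, `Var(Xₙ) → 0`, and
`Xₙ/√Var(Xₙ) → N(0,1)` in distribution, then
`log((1+Xₙ)/((1+Yₙ)(1+Zₙ)))/√Var(Xₙ - Yₙ - Zₙ) → N(0,1)` in distribution. -/
theorem stmt11 {Ω : Type*} [MeasureSpace Ω] [IsProbabilityMeasure (ℙ : Measure Ω)]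
    (X Y Z : ℕ → Ω → ℝ)
    (hXmeas : ∀ n, Measurable (X n)) (hYmeas : ∀ n, Measurable (Y n))
    (hZmeas : ∀ n, Measurable (Z n))
    (hX2 : ∀ n, MemLp (X n) 2 ℙ) (hY2 : ∀ n, MemLp (Y n) 2 ℙ)
    (hZ2 : ∀ n, MemLp (Z n) 2 ℙ)
    (hXlb : ∀ n ω, -1 ≤ X n ω) (hYlb : ∀ n ω, -1 ≤ Y n ω) (hZlb : ∀ n ω, -1 ≤ Z n ω)
    (hEX : ∀ n, ∫ ω, X n ω ∂ℙ = 0) (hEY : ∀ n, ∫ ω, Y n ω ∂ℙ = 0)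
    (hEZ : ∀ n, ∫ ω, Z n ω ∂ℙ = 0)
    (hVY : (fun n => variance (Y n) ℙ) =o[atTop] fun n => variance (X n) ℙ)
    (hVZ : (fun n => variance (Z n) ℙ) =o[atTop] fun n => variance (X n) ℙ)
    (hVX : Tendsto (fun n => variance (X n) ℙ) atTop (nhds 0))
    (hCLT : ∀ x : ℝ,
      Tendsto (fun n => ℙ {ω | X n ω / Real.sqrt (variance (X n) ℙ) ≤ x}) atTop
        (nhds (gaussianReal 0 1 (Set.Iic x)))) :
    ∀ x : ℝ,
      Tendsto (fun n =>
          ℙ {ω | Real.log ((1 + X n ω) / ((1 + Y n ω) * (1 + Z n ω)))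
              / Real.sqrt (variance (fun ω => X n ω - Y n ω - Z n ω) ℙ) ≤ x}) atTop
        (nhds (gaussianReal 0 1 (Set.Iic x))) :=
  stmt11_general X Y Z hXmeas hX2 hY2 hZ2 hEX hEY hEZ hVY hVZ hVX hCLT
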